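/- Under the same hypotheses as the previous statement, the relations z₁z₂ + z₃z₁ + z₂z₃ = 0 and z₂z₁ + z₁z₃ + z₃z₂ = 0 hold in A. -/

import Mathlib

/-!
Expanding `y z_j = q₂ z_j y` with `q₁q₂ = −ω` gives `(1 − ω) y x_j y = q₂ x_j y² + q₁ y² x_j`.
Using it to eliminate the middle terms of `z_h z_j` yields
`(1 − ω) z_h z_j = Φ (x_h x_j)` with `Φ t = q₂ t y² − q₁(1 − ω) y t y + q₁³ y² t`.
As `Φ` is additive and `1 − ω ≠ 0`, every relation `x_a x_b + x_c x_d + x_e x_f = 0` among the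
generators transfers to the `z`'s.
-/

/-- `z_h = x_h x₄ − q₁ x₄ x_h` (here `y` plays the role of `x₄` and the first
three generators are indexed by `ZMod 3`, with `x₃ = x 0`, so that `x 3 = x₃`). -/
def zz {k : Type*} [Field k] {A : Type*} [Ring A] [Algebra k A]
    (q1 : k) (x : ZMod 3 → A) (y : A) (h : ZMod 3) : A :=
  x h * y - q1 • (y * x h)

/-- `u_{ij} = (ad_c x_i) z_j = x_i z_j + q₁ z_{2i−j} x_i`. -/
def uu {k : Type*} [Field k] {A : Type*} [Ring A] [Algebra k A]
    (q1 : k) (x : ZMod 3 → A) (y : A) (i j : ZMod 3) : A :=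
  x i * zz q1 x y j + q1 • (zz q1 x y (2 * i - j) * x i)

section QCommuting

variable {k : Type*} [Field k] {A : Type*} [Ring A] [Algebra k A]
  {ω q1 q2 : k} {x : ZMod 3 → A} {y : A}

lemma one_sub_smul_y_mul_x_mul_y (hq : q1 * q2 = -ω)
    (hz : ∀ h : ZMod 3, y * zz q1 x y h = q2 • (zz q1 x y h * y)) (j : ZMod 3) :
    (1 - ω) • (y * x j * y) = q2 • (x j * y * y) + q1 • (y * y * x j) := by
  have hq' : q2 * q1 = -ω := by rw [mul_comm, hq]
  have hj := hz j
  simp only [zz, mul_sub, sub_mul, smul_mul_assoc, mul_smul_comm, smul_smul, smul_sub,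
    mul_assoc, hq'] at hj ⊢
  linear_combination (norm := module) hj

lemma one_sub_smul_zz_mul_zz (hq : q1 * q2 = -ω)
    (hz : ∀ h : ZMod 3, y * zz q1 x y h = q2 • (zz q1 x y h * y)) (h j : ZMod 3) :
    (1 - ω) • (zz q1 x y h * zz q1 x y j)
      = q2 • (x h * x j * y * y) - (q1 * (1 - ω)) • (y * (x h * x j) * y)
        + q1 ^ 3 • (y * y * (x h * x j)) := by
  have hj := congrArg (x h * ·) (one_sub_smul_y_mul_x_mul_y hq hz j)
  have hh := congrArg (· * x j) (one_sub_smul_y_mul_x_mul_y hq hz h)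
  simp only [zz, mul_sub, sub_mul, mul_add, add_mul, smul_mul_assoc, mul_smul_comm, smul_smul,
    smul_sub, mul_assoc] at hj hh ⊢
  linear_combination (norm := module) hj + (q1 * q1) • hh
    + (q1 * hq) • (x h * (y * (y * x j)))

lemma zz_sum_eq_zero (hω1 : ω ≠ 1) (hq : q1 * q2 = -ω)
    (hz : ∀ h : ZMod 3, y * zz q1 x y h = q2 • (zz q1 x y h * y)) {a b c d e f : ZMod 3}
    (hs : x a * x b + x c * x d + x e * x f = 0) :
    zz q1 x y a * zz q1 x y b + zz q1 x y c * zz q1 x y d + zz q1 x y e * zz q1 x y f = 0 := by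
  let Φ : A → A := fun t ↦
    q2 • (t * y * y) - (q1 * (1 - ω)) • (y * t * y) + q1 ^ 3 • (y * y * t)
  have hΦ : Φ (x a * x b) + Φ (x c * x d) + Φ (x e * x f) = 0 := by
    have := congrArg Φ hs
    simp only [Φ, mul_add, add_mul, mul_zero, zero_mul, smul_add, smul_zero] at this ⊢
    linear_combination (norm := module) this
  have hne : (1 : k) - ω ≠ 0 := sub_ne_zero.mpr hω1.symm
  refine (smul_eq_zero.mp ?_).resolve_left hne
  simpa only [smul_add, one_sub_smul_zz_mul_zz hq hz] using hΦ

end QCommuting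

theorem z_sum_relations_general {k : Type*} [Field k]
    (ω q1 q2 : k) (hω1 : ω ≠ 1) (hq : q1 * q2 = -ω)
    {A : Type*} [Ring A] [Algebra k A] (x : ZMod 3 → A) (y : A)
    (hs1 : x 1 * x 2 + x 3 * x 1 + x 2 * x 3 = 0)
    (hs2 : x 2 * x 1 + x 1 * x 3 + x 3 * x 2 = 0)
    (hz : ∀ h : ZMod 3, y * zz q1 x y h = q2 • (zz q1 x y h * y)) :
    zz q1 x y 1 * zz q1 x y 2 + zz q1 x y 3 * zz q1 x y 1
        + zz q1 x y 2 * zz q1 x y 3 = 0 ∧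
    zz q1 x y 2 * zz q1 x y 1 + zz q1 x y 1 * zz q1 x y 3
        + zz q1 x y 3 * zz q1 x y 2 = 0 :=
  ⟨zz_sum_eq_zero hω1 hq hz hs1, zz_sum_eq_zero hω1 hq hz hs2⟩

/-- under the same hypotheses as Statement 10, the relations
`z₁z₂ + z₃z₁ + z₂z₃ = 0` and `z₂z₁ + z₁z₃ + z₃z₂ = 0` hold in `A`. -/
theorem z_sum_relations {k : Type*} [Field k] [CharZero k]
    (ω q1 q2 : k) (hω : ω ^ 3 = 1) (hω1 : ω ≠ 1) (hq : q1 * q2 = -ω)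
    {A : Type*} [Ring A] [Algebra k A] (x : ZMod 3 → A) (y : A)
    (hx2 : ∀ i : ZMod 3, x i ^ 2 = 0)
    (hs1 : x 1 * x 2 + x 3 * x 1 + x 2 * x 3 = 0)
    (hs2 : x 2 * x 1 + x 1 * x 3 + x 3 * x 2 = 0)
    (hu2 : uu q1 x y 2 1 = ω • uu q1 x y 1 3)
    (hu3 : uu q1 x y 3 1 = ω • uu q1 x y 1 2)
    (hz : ∀ h : ZMod 3, y * zz q1 x y h = q2 • (zz q1 x y h * y)) :
    zz q1 x y 1 * zz q1 x y 2 + zz q1 x y 3 * zz q1 x y 1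
        + zz q1 x y 2 * zz q1 x y 3 = 0 ∧
    zz q1 x y 2 * zz q1 x y 1 + zz q1 x y 1 * zz q1 x y 3
        + zz q1 x y 3 * zz q1 x y 2 = 0 :=
  z_sum_relations_general ω q1 q2 hω1 hq x y hs1 hs2 hz
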